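/- Let C(P) = circ(P_0, P_1, ..., P_{n-1}) be the circulant matrix of the first n Cordonnier (Padovan) numbers. Then for each j with w^{-3j} + w^{-2j} - 1 ≠ 0, the eigenvalue λ_j(C(P)) = Σ_{k=0}^{n-1} P_k w^{-jk} equals (P_n - 1 + (P_{n+1} - 1)w^{-j} + P_{n-1} w^{-2j}) / (w^{-3j} + w^{-2j} - 1), where w = e^{2πi/n}. -/
import Mathlib


/-- The Cordonnier (Padovan) sequence: P 0 = P 1 = P 2 = 1, P (n+3) = P (n+1) + P n. -/
def cordonnier : ℕ → ℤ
  | 0 => 1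
  | 1 => 1
  | 2 => 1
  | (n + 3) => cordonnier (n + 1) + cordonnier n

lemma cordonnier_key (z : ℂ) (m : ℕ) :
    (∑ k ∈ Finset.range (m + 1), (cordonnier k : ℂ) * z ^ k) * (z ^ 3 + z ^ 2 - 1) =
      -1 - z + (cordonnier (m + 1) : ℂ) * z ^ (m + 1) +
        (cordonnier (m + 2) : ℂ) * z ^ (m + 2) + (cordonnier m : ℂ) * z ^ (m + 3) := by
  induction m with
  | zero => simp [cordonnier]; ring
  | succ m ih =>
      rw [Finset.sum_range_succ, add_mul, ih]
      have h3 : (cordonnier (m + 3) : ℂ) = cordonnier (m + 1) + cordonnier m := by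
        rw [show cordonnier (m + 3) = cordonnier (m + 1) + cordonnier m from rfl]
        push_cast; ring
      rw [h3]
      ring

open Complex in
theorem eigenvalue_circulant_cordonnier
    (n : ℕ) (hn : 1 ≤ n) (j : ℕ) (hj : j < n)
    (w : ℂ) (hw : w = Complex.exp (2 * Real.pi * I / n))
    (hden : w ^ (-(3 * j : ℤ)) + w ^ (-(2 * j : ℤ)) - 1 ≠ 0) :
    ∑ k ∈ Finset.range n, (cordonnier k : ℂ) * w ^ (-(j * k : ℤ)) =
      ((cordonnier n : ℂ) - 1 + ((cordonnier (n + 1) : ℂ) - 1) * w ^ (-(j : ℤ)) +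
          (cordonnier (n - 1) : ℂ) * w ^ (-(2 * j : ℤ))) /
        (w ^ (-(3 * j : ℤ)) + w ^ (-(2 * j : ℤ)) - 1) := by
  have hn0 : (n : ℂ) ≠ 0 := Nat.cast_ne_zero.mpr (by omega)
  set z : ℂ := w ^ (-(j : ℤ)) with hz
  have hwn : w ^ n = 1 := by
    rw [hw, ← Complex.exp_nat_mul]
    rw [show (n : ℂ) * (2 * Real.pi * I / n) = 2 * Real.pi * I by field_simp]
    exact Complex.exp_two_pi_mul_I
  have hzk : ∀ k : ℕ, w ^ (-(j * k : ℤ)) = z ^ k := by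
    intro k
    rw [hz, ← zpow_natCast (w ^ (-(j : ℤ))) k, ← zpow_mul]
    ring_nf
  have hz2 : w ^ (-(2 * j : ℤ)) = z ^ 2 := by
    rw [show (-(2 * j : ℤ)) = -((j : ℤ) * ((2 : ℕ) : ℤ)) by push_cast; ring]; exact hzk 2
  have hz3 : w ^ (-(3 * j : ℤ)) = z ^ 3 := by
    rw [show (-(3 * j : ℤ)) = -((j : ℤ) * ((3 : ℕ) : ℤ)) by push_cast; ring]; exact hzk 3
  have hzn : z ^ n = 1 := by
    rw [hz, ← zpow_natCast (w ^ (-(j : ℤ))) n, ← zpow_mul, mul_comm, zpow_mul,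
      zpow_natCast, hwn, one_zpow]
  simp only [hzk, hz2, hz3] at *
  rw [eq_div_iff hden]
  obtain ⟨m, rfl⟩ : ∃ m, n = m + 1 := ⟨n - 1, by omega⟩
  rw [cordonnier_key z m]
  have h1 : z ^ (m + 1 + 1) = z := by
    rw [pow_succ, hzn, one_mul]
  have h2 : z ^ (m + 1 + 2) = z ^ 2 := by
    rw [show m + 1 + 2 = (m + 1) + 2 from rfl, pow_add, hzn, one_mul]
  have h3 : z ^ (m + 1 + 3) = z ^ 3 := by
    rw [show m + 1 + 3 = (m + 1) + 3 from rfl, pow_add, hzn, one_mul]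
  rw [show m + 2 = m + 1 + 1 from rfl, show m + 3 = m + 1 + 2 from rfl, h1, h2]
  simp only [Nat.add_sub_cancel]
  rw [hzn]
  ring
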